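/- Let ψ_L ∈ C^∞(𝕋³_L) and define the operator J_L = 4(-Δ_L)^{-1/2} ψ_L (-Δ_L + 1)^{-1} ψ_L (-Δ_L)^{-1/2} on L²(𝕋³_L), where ψ_L acts by multiplication. Then J_L is trace class and satisfies J_L ≤ C_L (-Δ_L + 1)^{-2} for a constant C_L depending on L and Sobolev norms of ψ_L. -/

import Mathlib

/-!
In Fourier variables `J_L = A†A`, where `A = Aop` has the kernel
`A(m, k) = 2 L^{-3/2} ⟨m⟩⁻¹ ψ̂(m - k) |k|⁻¹` (`k ≠ 0`, `⟨k⟩ = (|k|² + 1)^{1/2}`), so the trace of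
`J_L` is `∑ |A(m, k)|²` and its quadratic form is `‖A f‖²`. Everything rests on the pointwise bound
`⟨m⟩⁻¹ |k|⁻¹ ≤ c ⟨m - k⟩ ⟨k⟩⁻²`, which follows from `|k| ≤ 2 ⟨m⟩ ⟨m - k⟩` and `|k| ≥ 2π/L`.
With `h = |ψ̂| ⟨·⟩`, summable because `ψ` is smooth, it gives `|A(m, k)| ≲ h(m - k) ⟨k⟩⁻²`.
The trace is then at most a multiple of `∑ h(m - k)² ⟨k⟩⁻⁴ = ‖h‖₂² ∑ ⟨k⟩⁻⁴ < ∞`, and Young's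
inequality `‖h ⋆ g‖₂ ≤ ‖h‖₁ ‖g‖₂` with `g = |f| ⟨·⟩⁻²` gives `‖A f‖² ≲ ‖g‖₂² = ⟨f, (-Δ_L + 1)⁻² f⟩`.
-/

open scoped Real BigOperators

abbrev Lat3 := Fin 3 → ℤ

noncomputable def knorm (L : ℝ) (k : Lat3) : ℝ :=
  (2 * Real.pi / L) * Real.sqrt (∑ i, ((k i : ℝ)) ^ 2)

/-- Fourier representation of `A = 2(-Δ_L+1)^{-1/2} ψ_L (-Δ_L)^{-1/2}` (with `ψ_L` acting by
multiplication, i.e. by convolution with its Fourier coefficients `ψc`), so that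
`J_L = A†A` and `⟨f, J_L f⟩ = ‖Af‖²`. -/
noncomputable def Aop (L : ℝ) (ψc : Lat3 → ℂ) (f : Lat3 → ℂ) (m : Lat3) : ℂ :=
  2 * (((knorm L m ^ 2 + 1) ^ (-(1:ℝ)/2) : ℝ) : ℂ) * ((L ^ (-(3:ℝ)/2) : ℝ) : ℂ) *
    ∑' k : Lat3, if k = 0 then 0 else ψc (m - k) * f k * (((knorm L k)⁻¹ : ℝ) : ℂ)

theorem summable_mul_of_summable_mul_sq {ι : Type*} {w g : ι → ℝ} (hw : ∀ i, 0 ≤ w i)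
    (hws : Summable w) (hwg : Summable fun i => w i * g i ^ 2) :
    Summable fun i => w i * g i :=
  (hws.add hwg).of_norm_bounded fun i => by
    rw [Real.norm_eq_abs, abs_mul, abs_of_nonneg (hw i)]
    nlinarith [mul_nonneg (hw i) (sq_nonneg (|g i| - 1)), sq_abs (g i), hw i]

theorem sq_tsum_mul_le_tsum_mul_tsum_mul_sq {ι : Type*} {w g : ι → ℝ} (hw : ∀ i, 0 ≤ w i)
    (hws : Summable w) (hwg : Summable fun i => w i * g i ^ 2) :
    (∑' i, w i * g i) ^ 2 ≤ (∑' i, w i) * ∑' i, w i * g i ^ 2 := by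
  refine le_of_tendsto' ((summable_mul_of_summable_mul_sq hw hws hwg).hasSum.pow 2) fun s => ?_
  calc (∑ i ∈ s, w i * g i) ^ 2 ≤ (∑ i ∈ s, w i) * ∑ i ∈ s, w i * g i ^ 2 :=
        Finset.sum_sq_le_sum_mul_sum_of_sq_le_mul s (fun i _ => hw i)
          (fun i _ => mul_nonneg (hw i) (sq_nonneg _)) (fun i _ => le_of_eq (by ring))
    _ ≤ (∑' i, w i) * ∑' i, w i * g i ^ 2 :=
        mul_le_mul (hws.sum_le_tsum s fun i _ => hw i)
          (hwg.sum_le_tsum s fun i _ => mul_nonneg (hw i) (sq_nonneg _))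
          (Finset.sum_nonneg fun i _ => mul_nonneg (hw i) (sq_nonneg _))
          (tsum_nonneg hw)

theorem hasSum_mul_comp_sub {G : Type*} [AddCommGroup G] {u v : G → ℝ} (hu : ∀ x, 0 ≤ u x)
    (hv : ∀ x, 0 ≤ v x) (hus : Summable u) (hvs : Summable v) :
    HasSum (fun p : G × G => u (p.1 - p.2) * v p.2) ((∑' x, u x) * ∑' x, v x) := by
  let e : G × G ≃ G × G :=
    { toFun := fun p => (p.1 - p.2, p.2)
      invFun := fun q => (q.1 + q.2, q.2)
      left_inv := fun p => by simp
      right_inv := fun q => by simp }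
  exact e.hasSum_iff.mpr (hus.hasSum.mul hvs.hasSum (hus.mul_of_nonneg hvs hu hv))

section DiscreteConvolution

variable {G : Type*} [AddCommGroup G]

noncomputable def discreteConv (h g : G → ℝ) (m : G) : ℝ := ∑' k, h (m - k) * g k

variable {h g : G → ℝ}

theorem summable_comp_sub_mul_sq (hh : ∀ x, 0 ≤ h x) (hhs : Summable h)
    (hg : Summable fun x => g x ^ 2) (m : G) : Summable fun k => h (m - k) * g k ^ 2 :=
  (hasSum_mul_comp_sub hh (fun x => sq_nonneg (g x)) hhs hg).summable.prod_factor m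

theorem summable_comp_sub_mul (hh : ∀ x, 0 ≤ h x) (hhs : Summable h)
    (hg : Summable fun x => g x ^ 2) (m : G) : Summable fun k => h (m - k) * g k :=
  summable_mul_of_summable_mul_sq (fun k => hh (m - k))
    ((Equiv.subLeft m).summable_iff.mpr hhs) (summable_comp_sub_mul_sq hh hhs hg m)

theorem sq_discreteConv_le (hh : ∀ x, 0 ≤ h x) (hhs : Summable h)
    (hg : Summable fun x => g x ^ 2) (m : G) :
    discreteConv h g m ^ 2 ≤ (∑' x, h x) * ∑' k, h (m - k) * g k ^ 2 := by
  have hsub : ∑' k, h (m - k) = ∑' x, h x := (Equiv.subLeft m).tsum_eq h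
  rw [← hsub]
  exact sq_tsum_mul_le_tsum_mul_tsum_mul_sq (fun k => hh (m - k))
    ((Equiv.subLeft m).summable_iff.mpr hhs) (summable_comp_sub_mul_sq hh hhs hg m)

theorem summable_sq_discreteConv_and_tsum_le (hh : ∀ x, 0 ≤ h x) (hhs : Summable h)
    (hg : Summable fun x => g x ^ 2) :
    Summable (fun m => discreteConv h g m ^ 2) ∧
      ∑' m, discreteConv h g m ^ 2 ≤ (∑' x, h x) ^ 2 * ∑' x, g x ^ 2 := by
  have hP := hasSum_mul_comp_sub hh (fun x => sq_nonneg (g x)) hhs hg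
  have hbound : Summable fun m => (∑' x, h x) * ∑' k, h (m - k) * g k ^ 2 :=
    hP.summable.prod.mul_left _
  have hsq := hbound.of_nonneg_of_le (fun m => sq_nonneg _) (sq_discreteConv_le hh hhs hg)
  refine ⟨hsq, ?_⟩
  calc ∑' m, discreteConv h g m ^ 2 ≤ ∑' m, (∑' x, h x) * ∑' k, h (m - k) * g k ^ 2 :=
        hsq.tsum_mono hbound (sq_discreteConv_le hh hhs hg)
    _ = (∑' x, h x) ^ 2 * ∑' x, g x ^ 2 := by
        rw [tsum_mul_left, ← hP.summable.tsum_prod, hP.tsum_eq]; ring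

end DiscreteConvolution

theorem summable_prod_apply {α : Type*} {g : α → ℝ} (hg : ∀ a, 0 ≤ g a) (hgs : Summable g) :
    ∀ d : ℕ, Summable fun k : Fin d → α => ∏ i, g (k i)
  | 0 => .of_finite
  | d + 1 => by
    refine (Fin.consEquiv fun _ => α).summable_iff.mp ?_
    simpa [Function.comp_def, Fin.prod_univ_succ] using
      hgs.mul_of_nonneg (summable_prod_apply hg hgs d) hg
        fun k => Finset.prod_nonneg fun i _ => hg (k i)

theorem summable_one_add_sq_rpow_neg {t : ℝ} (ht : 1 / 2 < t) :
    Summable fun n : ℤ => (1 + (n : ℝ) ^ 2) ^ (-t) := by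
  refine ((Real.summable_one_div_int_add_rpow 0 (2 * t)).mpr (by linarith))
    |>.of_norm_bounded_eventually ?_
  filter_upwards [Filter.eventually_cofinite_ne 0] with n hn
  have hn' : 0 < |(n : ℝ)| := by positivity
  rw [Real.norm_of_nonneg (by positivity), add_zero, one_div, ← Real.rpow_neg hn'.le,
    show -(2 * t) = (2 : ℕ) * -t by push_cast; ring, Real.rpow_natCast_mul hn'.le, sq_abs]
  exact Real.rpow_le_rpow_of_nonpos (by positivity) (by linarith) (by linarith)

theorem summable_one_add_sum_sq_rpow_neg (d : ℕ) {t : ℝ} (ht : 1 / 2 < t) :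
    Summable fun k : Fin d → ℤ => (1 + ∑ i, (k i : ℝ) ^ 2) ^ (-(d * t)) := by
  refine (summable_prod_apply (fun n => by positivity) (summable_one_add_sq_rpow_neg ht) d)
    |>.of_nonneg_of_le (fun k => by positivity) fun k => ?_
  have hprod : ∏ i, (1 + (k i : ℝ) ^ 2) ≤ (1 + ∑ i, (k i : ℝ) ^ 2) ^ d := by
    calc ∏ i, (1 + (k i : ℝ) ^ 2) ≤ ∏ _i : Fin d, (1 + ∑ i, (k i : ℝ) ^ 2) :=
          Finset.prod_le_prod (fun i _ => by positivity) fun i _ => by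
            gcongr
            exact Finset.single_le_sum (f := fun i => (k i : ℝ) ^ 2)
              (fun i _ => sq_nonneg _) (Finset.mem_univ i)
      _ = _ := by simp
  rw [Real.finsetProd_rpow _ _ fun i _ => by positivity, neg_mul_eq_mul_neg,
    Real.rpow_natCast_mul (by positivity)]
  exact Real.rpow_le_rpow_of_nonpos (Finset.prod_pos fun i _ => by positivity) hprod
    (by linarith)

section Lattice

variable {L : ℝ}

theorem knorm_nonneg (hL : 0 ≤ L) (k : Lat3) : 0 ≤ knorm L k := by
  unfold knorm; positivity

theorem knorm_sq (L : ℝ) (k : Lat3) :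
    knorm L k ^ 2 = (2 * π / L) ^ 2 * ∑ i, (k i : ℝ) ^ 2 := by
  rw [knorm, mul_pow, Real.sq_sqrt (by positivity)]

theorem knorm_eq_mul_norm (L : ℝ) (k : Lat3) :
    knorm L k = 2 * π / L * ‖(WithLp.toLp 2 fun i => (k i : ℝ) : EuclideanSpace ℝ (Fin 3))‖ := by
  simp [knorm, EuclideanSpace.norm_eq]

theorem knorm_le_add_knorm_sub (hL : 0 ≤ L) (m k : Lat3) :
    knorm L k ≤ knorm L m + knorm L (m - k) := by
  simp only [knorm_eq_mul_norm, ← mul_add]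
  gcongr
  have hsub : (WithLp.toLp 2 fun i => (k i : ℝ) : EuclideanSpace ℝ (Fin 3)) =
      (WithLp.toLp 2 fun i => (m i : ℝ)) - WithLp.toLp 2 fun i => ((m - k) i : ℝ) := by
    ext i; simp
  rw [hsub]
  exact norm_sub_le _ _

theorem two_pi_div_le_knorm (hL : 0 ≤ L) {k : Lat3} (hk : k ≠ 0) : 2 * π / L ≤ knorm L k := by
  obtain ⟨i, hi⟩ := Function.ne_iff.mp hk
  have hki : (1 : ℝ) ≤ (k i : ℝ) ^ 2 :=
    one_le_sq_iff_one_le_abs _ |>.mpr (by exact_mod_cast Int.one_le_abs hi)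
  have hsum : (1 : ℝ) ≤ ∑ j, (k j : ℝ) ^ 2 :=
    hki.trans (Finset.single_le_sum (f := fun j => (k j : ℝ) ^ 2) (fun j _ => sq_nonneg _)
      (Finset.mem_univ i))
  rw [knorm]
  exact le_mul_of_one_le_right (by positivity) (Real.one_le_sqrt.mpr hsum)

theorem knorm_pos (hL : 0 < L) {k : Lat3} (hk : k ≠ 0) : 0 < knorm L k :=
  (by positivity : 0 < 2 * π / L).trans_le (two_pi_div_le_knorm hL.le hk)

noncomputable def bracket (L : ℝ) (k : Lat3) : ℝ := √(knorm L k ^ 2 + 1)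

theorem bracket_sq (L : ℝ) (k : Lat3) : bracket L k ^ 2 = knorm L k ^ 2 + 1 :=
  Real.sq_sqrt (by positivity)

theorem one_le_bracket (L : ℝ) (k : Lat3) : 1 ≤ bracket L k :=
  Real.one_le_sqrt.mpr (by nlinarith [sq_nonneg (knorm L k)])

theorem bracket_pos (L : ℝ) (k : Lat3) : 0 < bracket L k :=
  one_pos.trans_le (one_le_bracket L k)

theorem knorm_le_bracket (L : ℝ) (k : Lat3) : knorm L k ≤ bracket L k :=
  Real.le_sqrt_of_sq_le (by linarith)

theorem rpow_neg_half_eq_inv_bracket (L : ℝ) (k : Lat3) :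
    (knorm L k ^ 2 + 1) ^ (-(1 : ℝ) / 2) = (bracket L k)⁻¹ := by
  rw [bracket, Real.sqrt_eq_rpow, neg_div, Real.rpow_neg (by positivity)]

theorem bracket_sq_le_mul_knorm_sq (hL : 0 < L) {k : Lat3} (hk : k ≠ 0) :
    bracket L k ^ 2 ≤ (1 + (L / (2 * π)) ^ 2) * knorm L k ^ 2 := by
  have hone : 1 ≤ (L / (2 * π)) ^ 2 * knorm L k ^ 2 := by
    rw [← mul_pow]
    refine one_le_pow₀ ?_
    calc (1 : ℝ) = L / (2 * π) * (2 * π / L) := by field_simp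
      _ ≤ L / (2 * π) * knorm L k := by gcongr; exact two_pi_div_le_knorm hL.le hk
  rw [bracket_sq]
  linarith

theorem knorm_le_two_mul_bracket_mul_bracket (hL : 0 ≤ L) (m k : Lat3) :
    knorm L k ≤ 2 * bracket L m * bracket L (m - k) := by
  have h1 := one_le_bracket L m
  have h2 := one_le_bracket L (m - k)
  nlinarith [knorm_le_add_knorm_sub hL m k, knorm_le_bracket L m, knorm_le_bracket L (m - k),
    mul_nonneg (sub_nonneg.mpr h1) (sub_nonneg.mpr h2)]

theorem inv_bracket_mul_inv_knorm_le (hL : 0 < L) (m : Lat3) {k : Lat3} (hk : k ≠ 0) :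
    (bracket L m)⁻¹ * (knorm L k)⁻¹ ≤
      2 * (1 + (L / (2 * π)) ^ 2) * bracket L (m - k) / bracket L k ^ 2 := by
  have hk0 := knorm_pos hL hk
  have hm0 := bracket_pos L m
  have h1 := bracket_sq_le_mul_knorm_sq hL hk
  have h2 := knorm_le_two_mul_bracket_mul_bracket hL.le m k
  rw [← mul_inv, inv_eq_one_div, div_le_div_iff₀ (mul_pos hm0 hk0) (pow_pos (bracket_pos L k) 2)]
  have hc : 0 ≤ (1 + (L / (2 * π)) ^ 2) * knorm L k := by positivity
  nlinarith [mul_le_mul_of_nonneg_left h2 hc]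

theorem summable_inv_bracket_pow_four (hL : 0 < L) :
    Summable fun k : Lat3 => (bracket L k ^ 4)⁻¹ := by
  set c := min 1 ((2 * π / L) ^ 2)
  have hc : 0 < c := lt_min one_pos (by positivity)
  have hsum : Summable fun k : Lat3 => ((1 + ∑ i, (k i : ℝ) ^ 2) ^ 2)⁻¹ := by
    convert summable_one_add_sum_sq_rpow_neg 3 (t := 2 / 3) (by norm_num) using 2 with k
    rw [Real.rpow_neg (by positivity), show ((3 : ℕ) : ℝ) * (2 / 3) = (2 : ℕ) by norm_num,
      Real.rpow_natCast]
  refine (hsum.mul_left (c ^ 2)⁻¹).of_nonneg_of_le (fun k => by positivity) fun k => ?_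
  have hle : c * (1 + ∑ i, (k i : ℝ) ^ 2) ≤ bracket L k ^ 2 := by
    rw [bracket_sq, knorm_sq]
    have := Finset.sum_nonneg fun i (_ : i ∈ Finset.univ) => sq_nonneg (k i : ℝ)
    nlinarith [min_le_left 1 ((2 * π / L) ^ 2), min_le_right 1 ((2 * π / L) ^ 2)]
  rw [← mul_inv, show bracket L k ^ 4 = (bracket L k ^ 2) ^ 2 by ring,
    ← mul_pow]
  gcongr

end Lattice

section Decay

variable {L : ℝ} {ψc : Lat3 → ℂ}

def RapidDecay (L : ℝ) (ψc : Lat3 → ℂ) : Prop :=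
  ∀ n : ℕ, ∃ Cn : ℝ, ∀ k : Lat3, ‖ψc k‖ ≤ Cn * (1 + knorm L k ^ 2) ^ (-(n:ℝ))

theorem exists_norm_le_mul_inv_bracket_pow (hψ : RapidDecay L ψc) (n : ℕ) :
    ∃ C : ℝ, ∀ k, ‖ψc k‖ ≤ C * (bracket L k ^ (2 * n))⁻¹ := by
  obtain ⟨C, hC⟩ := hψ n
  refine ⟨C, fun k => ?_⟩
  rw [pow_mul, bracket_sq, add_comm, ← Real.rpow_natCast, ← Real.rpow_neg (by positivity)]
  exact hC k

theorem summable_of_le_mul_inv_bracket_pow (hL : 0 < L) {a : Lat3 → ℝ} {C : ℝ} {n : ℕ}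
    (hn : 4 ≤ n) (ha : ∀ k, 0 ≤ a k) (hC : ∀ k, a k ≤ C * (bracket L k ^ n)⁻¹) : Summable a := by
  refine ((summable_inv_bracket_pow_four hL).mul_left |C|).of_nonneg_of_le ha fun k => ?_
  calc a k ≤ C * (bracket L k ^ n)⁻¹ := hC k
    _ ≤ |C| * (bracket L k ^ n)⁻¹ := by
        have := bracket_pos L k
        gcongr
        exact le_abs_self C
    _ ≤ |C| * (bracket L k ^ 4)⁻¹ := by
        have := bracket_pos L k
        gcongr
        exact one_le_bracket L k

theorem summable_norm_mul_bracket_and_sq (hL : 0 < L) (hψ : RapidDecay L ψc) :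
    Summable (fun j => ‖ψc j‖ * bracket L j) ∧
      Summable (fun j => (‖ψc j‖ * bracket L j) ^ 2) := by
  obtain ⟨C, hC⟩ := exists_norm_le_mul_inv_bracket_pow hψ 3
  have hle : ∀ j, ‖ψc j‖ * bracket L j ≤ C * (bracket L j ^ 5)⁻¹ := fun j => by
    have := bracket_pos L j
    calc ‖ψc j‖ * bracket L j ≤ C * (bracket L j ^ (2 * 3))⁻¹ * bracket L j := by
          gcongr; exact hC j
      _ = C * (bracket L j ^ 5)⁻¹ := by field_simp
  have hnn : ∀ j, 0 ≤ ‖ψc j‖ * bracket L j := fun j => by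
    have := bracket_pos L j; positivity
  refine ⟨summable_of_le_mul_inv_bracket_pow hL (by norm_num) hnn hle,
    summable_of_le_mul_inv_bracket_pow hL (n := 10) (C := C ^ 2) (by norm_num)
      (fun j => sq_nonneg _) fun j => ?_⟩
  calc (‖ψc j‖ * bracket L j) ^ 2 ≤ (C * (bracket L j ^ 5)⁻¹) ^ 2 :=
        pow_le_pow_left₀ (hnn j) (hle j) 2
    _ = C ^ 2 * (bracket L j ^ 10)⁻¹ := by ring

end Decay

section Operator

variable {L : ℝ} {ψc : Lat3 → ℂ}

theorem summable_hilbertSchmidt_Aop (hL : 0 < L) (hψ : RapidDecay L ψc) :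
    Summable (fun p : Lat3 × Lat3 =>
      if p.2 = 0 then (0:ℝ)
      else 4 * (knorm L p.1 ^ 2 + 1)⁻¹ * (L ^ 3)⁻¹ * ‖ψc (p.1 - p.2)‖ ^ 2 /
        knorm L p.2 ^ 2) := by
  set c := 2 * (1 + (L / (2 * π)) ^ 2)
  have hdom := (hasSum_mul_comp_sub (fun j => sq_nonneg (‖ψc j‖ * bracket L j))
    (fun k => (inv_pos.mpr (pow_pos (bracket_pos L k) 4)).le)
    (summable_norm_mul_bracket_and_sq hL hψ).2 (summable_inv_bracket_pow_four hL)).summable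
  refine (hdom.mul_left (4 * (L ^ 3)⁻¹ * c ^ 2)).of_nonneg_of_le (fun p => ?_) fun ⟨m, k⟩ => ?_
  · split_ifs <;> positivity
  · dsimp only
    split_ifs with hk
    · have := bracket_pos L (m - k)
      positivity
    have key := inv_bracket_mul_inv_knorm_le hL m hk
    calc 4 * (knorm L m ^ 2 + 1)⁻¹ * (L ^ 3)⁻¹ * ‖ψc (m - k)‖ ^ 2 / knorm L k ^ 2
        = 4 * (L ^ 3)⁻¹ * ‖ψc (m - k)‖ ^ 2 * ((bracket L m)⁻¹ * (knorm L k)⁻¹) ^ 2 := by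
          rw [← bracket_sq]; ring
      _ ≤ 4 * (L ^ 3)⁻¹ * ‖ψc (m - k)‖ ^ 2 * (c * bracket L (m - k) / bracket L k ^ 2) ^ 2 := by
          have := knorm_pos hL hk
          have := bracket_pos L m
          gcongr
      _ = 4 * (L ^ 3)⁻¹ * c ^ 2 *
            ((‖ψc (m - k)‖ * bracket L (m - k)) ^ 2 * (bracket L k ^ 4)⁻¹) := by
          ring

theorem norm_Aop_summand_le (hL : 0 < L) (f : Lat3 → ℂ) (m k : Lat3) :
    ‖if k = 0 then (0:ℂ) else ψc (m - k) * f k * (((knorm L k)⁻¹ : ℝ) : ℂ)‖ ≤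
      2 * (1 + (L / (2 * π)) ^ 2) * bracket L m *
        ((‖ψc (m - k)‖ * bracket L (m - k)) * (‖f k‖ / bracket L k ^ 2)) := by
  have hm := bracket_pos L m
  split_ifs with hk
  · have := bracket_pos L (m - k)
    have := bracket_pos L k
    simp only [norm_zero]
    positivity
  have key := inv_bracket_mul_inv_knorm_le hL m hk
  rw [inv_mul_le_iff₀ hm] at key
  rw [norm_mul, norm_mul, Complex.norm_real,
    Real.norm_of_nonneg (inv_nonneg.mpr (knorm_nonneg hL.le k))]
  calc ‖ψc (m - k)‖ * ‖f k‖ * (knorm L k)⁻¹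
      ≤ ‖ψc (m - k)‖ * ‖f k‖ *
          (bracket L m * (2 * (1 + (L / (2 * π)) ^ 2) * bracket L (m - k) / bracket L k ^ 2)) := by
        gcongr
    _ = _ := by ring

theorem norm_Aop_le (hL : 0 < L) (f : Lat3 → ℂ) (hh : Summable fun j => ‖ψc j‖ * bracket L j)
    (hg : Summable fun k => (‖f k‖ / bracket L k ^ 2) ^ 2) (m : Lat3) :
    ‖Aop L ψc f m‖ ≤ 2 * L ^ (-(3:ℝ)/2) * (2 * (1 + (L / (2 * π)) ^ 2)) *
      discreteConv (fun j => ‖ψc j‖ * bracket L j) (fun k => ‖f k‖ / bracket L k ^ 2) m := by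
  have hm := bracket_pos L m
  have hconv := (summable_comp_sub_mul (fun j => mul_nonneg (norm_nonneg _) (bracket_pos L j).le)
    hh hg m).hasSum.mul_left (2 * (1 + (L / (2 * π)) ^ 2) * bracket L m)
  have hsum := tsum_of_norm_bounded hconv (norm_Aop_summand_le hL f m)
  have hL' := Real.rpow_pos_of_pos hL (-(3:ℝ)/2)
  calc ‖Aop L ψc f m‖ = 2 * (bracket L m)⁻¹ * L ^ (-(3:ℝ)/2) *
        ‖∑' k, if k = 0 then (0:ℂ) else ψc (m - k) * f k * (((knorm L k)⁻¹ : ℝ) : ℂ)‖ := by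
        rw [Aop, rpow_neg_half_eq_inv_bracket, norm_mul, norm_mul, norm_mul, Complex.norm_real,
          Complex.norm_real, Real.norm_of_nonneg (inv_pos.mpr hm).le, Real.norm_of_nonneg hL'.le,
          Complex.norm_ofNat]
    _ ≤ 2 * (bracket L m)⁻¹ * L ^ (-(3:ℝ)/2) * (2 * (1 + (L / (2 * π)) ^ 2) * bracket L m *
          discreteConv (fun j => ‖ψc j‖ * bracket L j) (fun k => ‖f k‖ / bracket L k ^ 2) m) := by
        gcongr
        exact hsum
    _ = _ := by field_simp

theorem tsum_norm_Aop_sq_le (hL : 0 < L) (hψ : RapidDecay L ψc) (f : Lat3 → ℂ) (hf : Summable fun k => ‖f k‖ ^ 2) :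
    ∑' m, ‖Aop L ψc f m‖ ^ 2 ≤
      (2 * L ^ (-(3:ℝ)/2) * (2 * (1 + (L / (2 * π)) ^ 2)) * ∑' j, ‖ψc j‖ * bracket L j) ^ 2 *
        ∑' k, ‖f k‖ ^ 2 / (knorm L k ^ 2 + 1) ^ 2 := by
  set c := 2 * L ^ (-(3:ℝ)/2) * (2 * (1 + (L / (2 * π)) ^ 2))
  have hh := (summable_norm_mul_bracket_and_sq hL hψ).1
  have hg : Summable fun k => (‖f k‖ / bracket L k ^ 2) ^ 2 :=
    hf.of_nonneg_of_le (fun k => sq_nonneg _) fun k => by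
      have := one_le_bracket L k
      gcongr
      exact div_le_self (norm_nonneg _) (one_le_pow₀ this)
  obtain ⟨hconv, hyoung⟩ := summable_sq_discreteConv_and_tsum_le
    (fun j => mul_nonneg (norm_nonneg _) (bracket_pos L j).le) hh hg
  have hpt : ∀ m, ‖Aop L ψc f m‖ ^ 2 ≤ c ^ 2 *
      discreteConv (fun j => ‖ψc j‖ * bracket L j) (fun k => ‖f k‖ / bracket L k ^ 2) m ^ 2 :=
    fun m => by rw [← mul_pow]; exact pow_le_pow_left₀ (norm_nonneg _) (norm_Aop_le hL f hh hg m) 2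
  have hnorm : ∑' k, (‖f k‖ / bracket L k ^ 2) ^ 2 = ∑' k, ‖f k‖ ^ 2 / (knorm L k ^ 2 + 1) ^ 2 :=
    tsum_congr fun k => by rw [div_pow, bracket_sq]
  calc ∑' m, ‖Aop L ψc f m‖ ^ 2
      ≤ ∑' m, c ^ 2 * discreteConv (fun j => ‖ψc j‖ * bracket L j)
          (fun k => ‖f k‖ / bracket L k ^ 2) m ^ 2 :=
        ((hconv.mul_left _).of_nonneg_of_le (fun m => sq_nonneg _) hpt).tsum_mono
          (hconv.mul_left _) hpt
    _ ≤ c ^ 2 * ((∑' j, ‖ψc j‖ * bracket L j) ^ 2 * ∑' k, (‖f k‖ / bracket L k ^ 2) ^ 2) := by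
        rw [tsum_mul_left]; gcongr
    _ = _ := by rw [hnorm]; ring

end Operator

/-- For smooth `ψ_L ∈ C^∞(𝕋³_L)` (rapidly decaying Fourier coefficients `ψc`), the operator
`J_L = 4(-Δ_L)^{-1/2} ψ_L (-Δ_L+1)^{-1} ψ_L (-Δ_L)^{-1/2}` is trace class (its trace
`Σ_{m,k≠0} 4(|m|²+1)^{-1} L^{-3} |ψc(m−k)|² |k|^{-2}` is finite) and satisfies
`J_L ≤ C_L (-Δ_L+1)^{-2}` in the sense of quadratic forms. -/
theorem JL_trace_class_and_bound :
    ∀ L : ℝ, 0 < L → ∀ ψc : Lat3 → ℂ,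
      (∀ n : ℕ, ∃ Cn : ℝ, ∀ k : Lat3, ‖ψc k‖ ≤ Cn * (1 + knorm L k ^ 2) ^ (-(n:ℝ))) →
      (Summable (fun p : Lat3 × Lat3 =>
        if p.2 = 0 then (0:ℝ)
        else 4 * (knorm L p.1 ^ 2 + 1)⁻¹ * (L ^ 3)⁻¹ * ‖ψc (p.1 - p.2)‖ ^ 2 /
          knorm L p.2 ^ 2)) ∧
      ∃ CL : ℝ, 0 < CL ∧
        ∀ f : Lat3 → ℂ,
          Summable (fun k : Lat3 => ‖f k‖ ^ 2) →
          (∀ m : Lat3, Summable (fun k : Lat3 =>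
            if k = 0 then (0:ℂ) else ψc (m - k) * f k * (((knorm L k)⁻¹ : ℝ) : ℂ))) →
          (∑' m : Lat3, ‖Aop L ψc f m‖ ^ 2) ≤
            CL * ∑' k : Lat3, ‖f k‖ ^ 2 / (knorm L k ^ 2 + 1) ^ 2 := by
  intro L hL ψc hψ
  refine ⟨summable_hilbertSchmidt_Aop hL hψ,
    (2 * L ^ (-(3:ℝ)/2) * (2 * (1 + (L / (2 * π)) ^ 2)) * ∑' j, ‖ψc j‖ * bracket L j) ^ 2 + 1,
    by positivity, fun f hf _ => ?_⟩
  exact (tsum_norm_Aop_sq_le hL hψ f hf).trans <| mul_le_mul_of_nonneg_right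
    (le_add_of_nonneg_right zero_le_one) (tsum_nonneg fun k => by positivity)
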